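/- arXiv:2204.03234 — 2 statements merged into one kernel-verified Lean document; each statement's English description precedes it below -/
import Mathlib

section
/- Let ∇ be a local inner derivation on B_sk(H). Then for every pair of distinct natural numbers i, j there exists a single element ā ∈ B_sk(H) such that ∇(I e_{i,i}) = [ā, I e_{i,i}], ∇(s_{i,j}) = [ā, s_{i,j}], ∇(I ē_{i,j}) = [ā, I ē_{i,j}], and ∇(I e_{j,j}) = [ā, I e_{j,j}]. -/
/-- The matrix unit `e_{i,j} ∈ B(H)` associated with an orthonormal basis `(e_n)`:
the rank-one operator `v ↦ ⟨v, e_j⟩ e_i` (inner product linear in `v`). -/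
noncomputable def matUnit {H : Type*} [NormedAddCommGroup H] [InnerProductSpace ℂ H]
    (e : HilbertBasis ℕ ℂ H) (i j : ℕ) : H →L[ℂ] H :=
  (innerSL ℂ (e j)).smulRight (e i)

section Aux

variable {H : Type*} [NormedAddCommGroup H] [InnerProductSpace ℂ H] [CompleteSpace H]

set_option linter.unusedSectionVars false

local notation "⟪" x ", " y "⟫" => @inner ℂ _ _ x y

lemma inner_e (e : HilbertBasis ℕ ℂ H) (m n : ℕ) :
    ⟪e m, e n⟫ = if m = n then 1 else 0 :=
  orthonormal_iff_ite.mp e.orthonormal m n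

lemma matUnit_apply (e : HilbertBasis ℕ ℂ H) (i j : ℕ) (v : H) :
    matUnit e i j v = ⟪e j, v⟫ • e i := rfl

lemma matUnit_basis (e : HilbertBasis ℕ ℂ H) (i j n : ℕ) :
    matUnit e i j (e n) = if j = n then e i else 0 := by
  rw [matUnit_apply, inner_e]
  split <;> simp

lemma clm_ext (e : HilbertBasis ℕ ℂ H) {X Y : H →L[ℂ] H}
    (h : ∀ n m, ⟪e m, X (e n)⟫ = ⟪e m, Y (e n)⟫) : X = Y := by
  apply ContinuousLinearMap.ext_on
    (Submodule.dense_iff_topologicalClosure_eq_top.mpr e.dense_span)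
  rintro x ⟨n, rfl⟩
  apply e.repr.injective
  ext m
  rw [e.repr_apply_apply, e.repr_apply_apply]
  exact h n m

lemma skew_entry {d : H →L[ℂ] H} (hd : ContinuousLinearMap.adjoint d = -d) (v w : H) :
    (starRingEnd ℂ) ⟪v, d w⟫ = -⟪w, d v⟫ := by
  rw [inner_conj_symm, ← ContinuousLinearMap.adjoint_inner_right d, hd,
    ContinuousLinearMap.neg_apply, inner_neg_right]

lemma comm_inner_eq_zero {b y : H →L[ℂ] H} (hy : ContinuousLinearMap.adjoint y = -y)
    {lam : ℂ} (hlam : (starRingEnd ℂ) lam = -lam) {v w : H}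
    (hv : y v = lam • v) (hw : y w = lam • w) :
    ⟪w, (b * y - y * b) v⟫ = 0 := by
  have h1 : ⟪w, (b * y) v⟫ = lam * ⟪w, b v⟫ := by
    rw [ContinuousLinearMap.mul_apply, hv, map_smul, inner_smul_right]
  have h2 : ⟪w, (y * b) v⟫ = lam * ⟪w, b v⟫ := by
    rw [ContinuousLinearMap.mul_apply, ← ContinuousLinearMap.adjoint_inner_left y, hy]
    rw [ContinuousLinearMap.neg_apply, hw, inner_neg_left, inner_smul_left, hlam]
    ring
  rw [ContinuousLinearMap.sub_apply, inner_sub_right, h1, h2, sub_self]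

lemma rsmul_clm (r : ℝ) (X : H →L[ℂ] H) : r • X = (r : ℂ) • X := by
  ext v
  simp

lemma adjoint_matUnit (e : HilbertBasis ℕ ℂ H) (i j : ℕ) :
    ContinuousLinearMap.adjoint (matUnit e i j) = matUnit e j i := by
  apply clm_ext e
  intro n m
  rw [ContinuousLinearMap.adjoint_inner_right]
  rw [matUnit_apply, matUnit_apply, inner_smul_left, inner_smul_right,
    inner_e, inner_e, inner_e]
  by_cases h1 : j = m <;> by_cases h2 : i = n <;>
    simp [h1, h2, eq_comm]

end Aux

set_option maxHeartbeats 2000000 in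
/-- **Lemma 5.1 (Ayupov–Arzikulov–Umrzaqov).**
Let `H` be a separable infinite-dimensional complex Hilbert space with orthonormal
basis `(e_n)` and let `D` be a local inner derivation on the Lie algebra `B_sk(H)` of
skew-adjoint bounded operators, i.e. a real-linear map such that every value is given
by some inner derivation.  Then for every pair of distinct `i, j` there is a single
element `ā ∈ B_sk(H)` with
`D(I e_{i,i}) = [ā, I e_{i,i}]`, `D(s_{i,j}) = [ā, s_{i,j}]`,
`D(I ē_{i,j}) = [ā, I ē_{i,j}]` and `D(I e_{j,j}) = [ā, I e_{j,j}]`,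
where `s_{i,j} = e_{i,j} - e_{j,i}`, `ē_{i,j} = e_{i,j} + e_{j,i}` and `I = √-1`. -/
theorem local_inner_derivation_common_implementing_element
    {H : Type*} [NormedAddCommGroup H] [InnerProductSpace ℂ H] [CompleteSpace H]
    (e : HilbertBasis ℕ ℂ H)
    (D : (H →L[ℂ] H) → (H →L[ℂ] H))
    (hDadd : ∀ x y : H →L[ℂ] H,
        ContinuousLinearMap.adjoint x = -x → ContinuousLinearMap.adjoint y = -y →
        D (x + y) = D x + D y)
    (hDsmul : ∀ (r : ℝ) (x : H →L[ℂ] H),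
        ContinuousLinearMap.adjoint x = -x → D (r • x) = r • D x)
    (hDloc : ∀ x : H →L[ℂ] H, ContinuousLinearMap.adjoint x = -x →
        ∃ a : H →L[ℂ] H, ContinuousLinearMap.adjoint a = -a ∧ D x = a * x - x * a) :
    ∀ i j : ℕ, i ≠ j →
      ∃ a : H →L[ℂ] H, ContinuousLinearMap.adjoint a = -a ∧
        D (Complex.I • matUnit e i i)
          = a * (Complex.I • matUnit e i i) - (Complex.I • matUnit e i i) * a ∧
        D (matUnit e i j - matUnit e j i)
          = a * (matUnit e i j - matUnit e j i) - (matUnit e i j - matUnit e j i) * a ∧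
        D (Complex.I • (matUnit e i j + matUnit e j i))
          = a * (Complex.I • (matUnit e i j + matUnit e j i))
            - (Complex.I • (matUnit e i j + matUnit e j i)) * a ∧
        D (Complex.I • matUnit e j j)
          = a * (Complex.I • matUnit e j j) - (Complex.I • matUnit e j j) * a := by
  intro i j hij
  classical
  have hji : j ≠ i := Ne.symm hij
  set p : H →L[ℂ] H := matUnit e i i with hpdef
  set q : H →L[ℂ] H := matUnit e j j with hqdef
  set eij : H →L[ℂ] H := matUnit e i j with heijdef
  set eji : H →L[ℂ] H := matUnit e j i with hejidef
  set x1 : H →L[ℂ] H := Complex.I • p with hx1def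
  set x2 : H →L[ℂ] H := eij - eji with hx2def
  set x3 : H →L[ℂ] H := Complex.I • (eij + eji) with hx3def
  set x4 : H →L[ℂ] H := Complex.I • q with hx4def
  have hIe : ∀ m n : ℕ, (inner ℂ (e m) (e n) : ℂ) = if m = n then 1 else 0 := inner_e e
  -- adjoints of matrix units
  have hadj_p : ContinuousLinearMap.adjoint p = p := adjoint_matUnit e i i
  have hadj_q : ContinuousLinearMap.adjoint q = q := adjoint_matUnit e j j
  have hadj_eij : ContinuousLinearMap.adjoint eij = eji := adjoint_matUnit e i j
  have hadj_eji : ContinuousLinearMap.adjoint eji = eij := adjoint_matUnit e j i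
  -- skewness of the four generators
  have hsk1 : ContinuousLinearMap.adjoint x1 = -x1 := by
    rw [hx1def, map_smulₛₗ, hadj_p, Complex.conj_I, neg_smul]
  have hsk2 : ContinuousLinearMap.adjoint x2 = -x2 := by
    rw [hx2def, map_sub, hadj_eij, hadj_eji, neg_sub]
  have hsk3 : ContinuousLinearMap.adjoint x3 = -x3 := by
    rw [hx3def, map_smulₛₗ, map_add, hadj_eij, hadj_eji, Complex.conj_I, neg_smul,
      add_comm eji eij]
  have hsk4 : ContinuousLinearMap.adjoint x4 = -x4 := by
    rw [hx4def, map_smulₛₗ, hadj_q, Complex.conj_I, neg_smul]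
  -- skewness is preserved
  have skadd : ∀ X Y : H →L[ℂ] H, ContinuousLinearMap.adjoint X = -X →
      ContinuousLinearMap.adjoint Y = -Y →
      ContinuousLinearMap.adjoint (X + Y) = -(X + Y) := by
    intro X Y hX hY
    rw [map_add, hX, hY, neg_add]
  have skneg : ∀ X : H →L[ℂ] H, ContinuousLinearMap.adjoint X = -X →
      ContinuousLinearMap.adjoint (-X) = -(-X) := by
    intro X hX
    rw [map_neg, hX]
  have skr : ∀ (r : ℝ) (X : H →L[ℂ] H), ContinuousLinearMap.adjoint X = -X →
      ContinuousLinearMap.adjoint ((r : ℝ) • X) = -((r : ℝ) • X) := by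
    intro r X hX
    rw [rsmul_clm, map_smulₛₗ, Complex.conj_ofReal, hX, smul_neg]
  have hDneg : ∀ X : H →L[ℂ] H, ContinuousLinearMap.adjoint X = -X → D (-X) = -(D X) := by
    intro X hX
    have h := hDsmul (-1) X hX
    rwa [neg_one_smul, neg_one_smul] at h
  -- skewness of values of D
  have hDskew : ∀ y : H →L[ℂ] H, ContinuousLinearMap.adjoint y = -y →
      ContinuousLinearMap.adjoint (D y) = -(D y) := by
    intro y hy
    obtain ⟨b, hb, hby⟩ := hDloc y hy
    rw [hby, ContinuousLinearMap.mul_def, ContinuousLinearMap.mul_def, map_sub,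
      ContinuousLinearMap.adjoint_comp, ContinuousLinearMap.adjoint_comp, hb, hy]
    simp only [ContinuousLinearMap.neg_comp, ContinuousLinearMap.comp_neg, neg_neg]
    abel
  set d1 : H →L[ℂ] H := D x1 with hd1def
  set d2 : H →L[ℂ] H := D x2 with hd2def
  set d3 : H →L[ℂ] H := D x3 with hd3def
  set d4 : H →L[ℂ] H := D x4 with hd4def
  have sk1 : ∀ m n : ℕ, (starRingEnd ℂ) (inner ℂ (e m) (d1 (e n))) = -(inner ℂ (e n) (d1 (e m))) :=
    fun m n => skew_entry (hDskew x1 hsk1) _ _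
  have sk2 : ∀ m n : ℕ, (starRingEnd ℂ) (inner ℂ (e m) (d2 (e n))) = -(inner ℂ (e n) (d2 (e m))) :=
    fun m n => skew_entry (hDskew x2 hsk2) _ _
  have sk3 : ∀ m n : ℕ, (starRingEnd ℂ) (inner ℂ (e m) (d3 (e n))) = -(inner ℂ (e n) (d3 (e m))) :=
    fun m n => skew_entry (hDskew x3 hsk3) _ _
  have sk4 : ∀ m n : ℕ, (starRingEnd ℂ) (inner ℂ (e m) (d4 (e n))) = -(inner ℂ (e n) (d4 (e m))) :=
    fun m n => skew_entry (hDskew x4 hsk4) _ _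
  -- the master relation
  have key : ∀ y : H →L[ℂ] H, ContinuousLinearMap.adjoint y = -y →
      ∀ lam : ℂ, (starRingEnd ℂ) lam = -lam →
      ∀ v w : H, y v = lam • v → y w = lam • w → inner ℂ w (D y v) = (0 : ℂ) := by
    intro y hy lam hlam v w hv hw
    obtain ⟨b, hb, hby⟩ := hDloc y hy
    rw [hby]
    exact comm_inner_eq_zero hy hlam hv hw
  have hconjI : (starRingEnd ℂ) Complex.I = -Complex.I := Complex.conj_I
  have hconjmI : (starRingEnd ℂ) (-Complex.I) = -(-Complex.I) := by simp
  have hconj0 : (starRingEnd ℂ) (0 : ℂ) = -(0 : ℂ) := by simp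
  -- basis actions
  have hpe : ∀ n, p (e n) = if i = n then e i else 0 := fun n => matUnit_basis e i i n
  have hqe : ∀ n, q (e n) = if j = n then e j else 0 := fun n => matUnit_basis e j j n
  have heije : ∀ n, eij (e n) = if j = n then e i else 0 := fun n => matUnit_basis e i j n
  have hejie : ∀ n, eji (e n) = if i = n then e j else 0 := fun n => matUnit_basis e j i n
  have a1i : x1 (e i) = Complex.I • e i := by
    rw [hx1def, ContinuousLinearMap.smul_apply, hpe]
    simp
  have a1n : ∀ n, n ≠ i → x1 (e n) = 0 := by
    intro n hn
    rw [hx1def, ContinuousLinearMap.smul_apply, hpe]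
    simp [Ne.symm hn]
  have a2i : x2 (e i) = -(e j) := by
    rw [hx2def, ContinuousLinearMap.sub_apply, heije, hejie]
    simp [hji]
  have a2j : x2 (e j) = e i := by
    rw [hx2def, ContinuousLinearMap.sub_apply, heije, hejie]
    simp [hij]
  have a2n : ∀ n, n ≠ i → n ≠ j → x2 (e n) = 0 := by
    intro n h1 h2
    rw [hx2def, ContinuousLinearMap.sub_apply, heije, hejie]
    simp [Ne.symm h1, Ne.symm h2]
  have a3i : x3 (e i) = Complex.I • e j := by
    rw [hx3def, ContinuousLinearMap.smul_apply, ContinuousLinearMap.add_apply, heije, hejie]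
    simp [hji]
  have a3j : x3 (e j) = Complex.I • e i := by
    rw [hx3def, ContinuousLinearMap.smul_apply, ContinuousLinearMap.add_apply, heije, hejie]
    simp [hij]
  have a3n : ∀ n, n ≠ i → n ≠ j → x3 (e n) = 0 := by
    intro n h1 h2
    rw [hx3def, ContinuousLinearMap.smul_apply, ContinuousLinearMap.add_apply, heije, hejie]
    simp [Ne.symm h1, Ne.symm h2]
  have a4j : x4 (e j) = Complex.I • e j := by
    rw [hx4def, ContinuousLinearMap.smul_apply, hqe]
    simp
  have a4n : ∀ n, n ≠ j → x4 (e n) = 0 := by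
    intro n hn
    rw [hx4def, ContinuousLinearMap.smul_apply, hqe]
    simp [Ne.symm hn]
  -- Z facts
  have Z1 : ∀ m n, m ≠ i → n ≠ i → (inner ℂ (e m) (d1 (e n)) : ℂ) = 0 := by
    intro m n hm hn
    exact key x1 hsk1 0 hconj0 (e n) (e m)
      (by rw [a1n n hn, zero_smul]) (by rw [a1n m hm, zero_smul])
  have Z1ii : (inner ℂ (e i) (d1 (e i)) : ℂ) = 0 :=
    key x1 hsk1 Complex.I hconjI (e i) (e i) a1i a1i
  have Z4 : ∀ m n, m ≠ j → n ≠ j → (inner ℂ (e m) (d4 (e n)) : ℂ) = 0 := by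
    intro m n hm hn
    exact key x4 hsk4 0 hconj0 (e n) (e m)
      (by rw [a4n n hn, zero_smul]) (by rw [a4n m hm, zero_smul])
  have Z4jj : (inner ℂ (e j) (d4 (e j)) : ℂ) = 0 :=
    key x4 hsk4 Complex.I hconjI (e j) (e j) a4j a4j
  have Z2 : ∀ m n, m ≠ i → m ≠ j → n ≠ i → n ≠ j → (inner ℂ (e m) (d2 (e n)) : ℂ) = 0 := by
    intro m n hm1 hm2 hn1 hn2
    exact key x2 hsk2 0 hconj0 (e n) (e m)
      (by rw [a2n n hn1 hn2, zero_smul]) (by rw [a2n m hm1 hm2, zero_smul])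
  have Z3 : ∀ m n, m ≠ i → m ≠ j → n ≠ i → n ≠ j → (inner ℂ (e m) (d3 (e n)) : ℂ) = 0 := by
    intro m n hm1 hm2 hn1 hn2
    exact key x3 hsk3 0 hconj0 (e n) (e m)
      (by rw [a3n n hn1 hn2, zero_smul]) (by rw [a3n m hm1 hm2, zero_smul])
  -- C0 facts (from x1 + x4)
  have hsk14 : ContinuousLinearMap.adjoint (x1 + x4) = -(x1 + x4) := skadd _ _ hsk1 hsk4
  have hD14 : D (x1 + x4) = d1 + d4 := hDadd x1 x4 hsk1 hsk4
  have C0a : (inner ℂ (e i) (d4 (e j)) : ℂ) = -(inner ℂ (e i) (d1 (e j))) := by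
    have h := key (x1 + x4) hsk14 Complex.I hconjI (e j) (e i)
      (by rw [ContinuousLinearMap.add_apply, a1n j hji, a4j, zero_add])
      (by rw [ContinuousLinearMap.add_apply, a1i, a4n i hij, add_zero])
    rw [hD14] at h
    simp only [ContinuousLinearMap.add_apply, inner_add_right] at h
    linear_combination h
  have C0b : (inner ℂ (e j) (d4 (e i)) : ℂ) = -(inner ℂ (e j) (d1 (e i))) := by
    have h := key (x1 + x4) hsk14 Complex.I hconjI (e i) (e j)
      (by rw [ContinuousLinearMap.add_apply, a1i, a4n i hij, add_zero])
      (by rw [ContinuousLinearMap.add_apply, a1n j hji, a4j, zero_add])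
    rw [hD14] at h
    simp only [ContinuousLinearMap.add_apply, inner_add_right] at h
    linear_combination h
  -- P2 facts (from x2 alone, eigenvectors e i ± I e j)
  have hv2p : x2 (e i + Complex.I • e j) = Complex.I • (e i + Complex.I • e j) := by
    rw [map_add, map_smul, a2i, a2j, smul_add, smul_smul, Complex.I_mul_I, neg_one_smul]
    abel
  have hv2m : x2 (e i - Complex.I • e j) = (-Complex.I) • (e i - Complex.I • e j) := by
    rw [map_sub, map_smul, a2i, a2j, smul_sub, smul_smul, neg_mul, Complex.I_mul_I,
      neg_neg, one_smul, neg_smul]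
    abel
  have F2a := key x2 hsk2 Complex.I hconjI _ _ hv2p hv2p
  have F2b := key x2 hsk2 (-Complex.I) hconjmI _ _ hv2m hv2m
  have expand : ∀ (d : H →L[ℂ] H) (c : ℂ) (v w : H),
      (inner ℂ (v + c • w) (d (v + c • w)) : ℂ)
        = inner ℂ v (d v) + c * inner ℂ v (d w) + (starRingEnd ℂ) c * inner ℂ w (d v)
          + (starRingEnd ℂ) c * c * inner ℂ w (d w) := by
    intro d c v w
    rw [map_add, map_smul]
    simp only [inner_add_left, inner_add_right, inner_smul_left, inner_smul_right]
    ring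
  have expand' : ∀ (d : H →L[ℂ] H) (c : ℂ) (v w : H),
      (inner ℂ (v - c • w) (d (v - c • w)) : ℂ)
        = inner ℂ v (d v) - c * inner ℂ v (d w) - (starRingEnd ℂ) c * inner ℂ w (d v)
          + (starRingEnd ℂ) c * c * inner ℂ w (d w) := by
    intro d c v w
    rw [map_sub, map_smul]
    simp only [inner_sub_left, inner_sub_right, inner_smul_left, inner_smul_right]
    ring
  rw [expand d2 Complex.I (e i) (e j), Complex.conj_I] at F2a
  rw [expand' d2 Complex.I (e i) (e j), Complex.conj_I] at F2b
  simp only [neg_mul, Complex.I_mul_I, neg_neg, one_mul] at F2a F2b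
  have P2a : (inner ℂ (e j) (d2 (e j)) : ℂ) = -(inner ℂ (e i) (d2 (e i))) := by
    linear_combination F2a / 2 + F2b / 2
  have P2b : (inner ℂ (e j) (d2 (e i)) : ℂ) = inner ℂ (e i) (d2 (e j)) := by
    linear_combination (Complex.I / 2) * F2a - (Complex.I / 2) * F2b
      + (inner ℂ (e j) (d2 (e i)) - inner ℂ (e i) (d2 (e j))) * Complex.I_sq
  -- P3 facts
  have hv3p : x3 (e i + (1:ℂ) • e j) = Complex.I • (e i + (1:ℂ) • e j) := by
    rw [map_add, map_smul, a3i, a3j]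
    module
  have hv3m : x3 (e i - (1:ℂ) • e j) = (-Complex.I) • (e i - (1:ℂ) • e j) := by
    rw [map_sub, map_smul, a3i, a3j]
    module
  have F3a := key x3 hsk3 Complex.I hconjI _ _ hv3p hv3p
  have F3b := key x3 hsk3 (-Complex.I) hconjmI _ _ hv3m hv3m
  rw [expand d3 1 (e i) (e j), map_one] at F3a
  rw [expand' d3 1 (e i) (e j), map_one] at F3b
  have P3a : (inner ℂ (e j) (d3 (e j)) : ℂ) = -(inner ℂ (e i) (d3 (e i))) := by
    linear_combination F3a / 2 + F3b / 2
  have P3b : (inner ℂ (e j) (d3 (e i)) : ℂ) = -(inner ℂ (e i) (d3 (e j))) := by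
    linear_combination F3a / 2 - F3b / 2
  -- K facts
  have hsk24 : ContinuousLinearMap.adjoint (x2 + x4) = -(x2 + x4) := skadd _ _ hsk2 hsk4
  have hsk124 : ContinuousLinearMap.adjoint (x1 + (x2 + x4)) = -(x1 + (x2 + x4)) :=
    skadd _ _ hsk1 hsk24
  have hD124 : D (x1 + (x2 + x4)) = d1 + (d2 + d4) := by
    rw [hDadd x1 (x2 + x4) hsk1 hsk24, hDadd x2 x4 hsk2 hsk4]
  have hsk124m : ContinuousLinearMap.adjoint (x2 + -(x1 + x4)) = -(x2 + -(x1 + x4)) :=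
    skadd _ _ hsk2 (skneg _ hsk14)
  have hD124m : D (x2 + -(x1 + x4)) = d2 + -(d1 + d4) := by
    rw [hDadd x2 (-(x1 + x4)) hsk2 (skneg _ hsk14), hDneg _ hsk14, hD14]
  have hvp : (x1 + (x2 + x4)) (e i - Complex.I • e j)
      = (0:ℂ) • (e i - Complex.I • e j) := by
    simp only [ContinuousLinearMap.add_apply, map_sub, map_smul, a1i, a1n j hji, a2i, a2j,
      a4j, a4n i hij, smul_zero, sub_zero, zero_sub, smul_smul, Complex.I_mul_I,
      neg_one_smul, zero_smul]
    match_scalars <;> simp [Complex.I_mul_I]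
  have hvm : (x2 + -(x1 + x4)) (e i + Complex.I • e j)
      = (0:ℂ) • (e i + Complex.I • e j) := by
    simp only [ContinuousLinearMap.add_apply, ContinuousLinearMap.neg_apply, map_add,
      map_smul, a1i, a1n j hji, a2i, a2j, a4j, a4n i hij, smul_zero, add_zero, zero_add,
      smul_smul, Complex.I_mul_I, neg_one_smul, zero_smul]
    match_scalars <;> simp [Complex.I_mul_I]
  have hwp : ∀ m, m ≠ i → m ≠ j → (x1 + (x2 + x4)) (e m) = (0:ℂ) • e m := by
    intro m h1 h2
    simp only [ContinuousLinearMap.add_apply, a1n m h1, a2n m h1 h2, a4n m h2,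
      add_zero, zero_smul]
  have hwm : ∀ m, m ≠ i → m ≠ j → (x2 + -(x1 + x4)) (e m) = (0:ℂ) • e m := by
    intro m h1 h2
    simp only [ContinuousLinearMap.add_apply, ContinuousLinearMap.neg_apply, a1n m h1,
      a2n m h1 h2, a4n m h2, add_zero, zero_add, neg_zero, zero_smul]
  have K1 : ∀ m, m ≠ i → m ≠ j →
      (inner ℂ (e m) (d2 (e i)) : ℂ) = Complex.I * inner ℂ (e m) (d4 (e j)) := by
    intro m h1 h2
    have hp := key _ hsk124 0 hconj0 _ (e m) hvp (hwp m h1 h2)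
    have hm := key _ hsk124m 0 hconj0 _ (e m) hvm (hwm m h1 h2)
    rw [hD124] at hp
    rw [hD124m] at hm
    simp only [ContinuousLinearMap.add_apply, ContinuousLinearMap.neg_apply, map_sub,
      map_add, map_smul, inner_add_right, inner_sub_right, inner_smul_right,
      inner_neg_right] at hp hm
    linear_combination hp / 2 + hm / 2 + Complex.I * Z1 m j h1 hji
  have K2 : ∀ m, m ≠ i → m ≠ j →
      (inner ℂ (e m) (d2 (e j)) : ℂ) = -Complex.I * inner ℂ (e m) (d1 (e i)) := by
    intro m h1 h2
    have hp := key _ hsk124 0 hconj0 _ (e m) hvp (hwp m h1 h2)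
    have hm := key _ hsk124m 0 hconj0 _ (e m) hvm (hwm m h1 h2)
    rw [hD124] at hp
    rw [hD124m] at hm
    simp only [ContinuousLinearMap.add_apply, ContinuousLinearMap.neg_apply, map_sub,
      map_add, map_smul, inner_add_right, inner_sub_right, inner_smul_right,
      inner_neg_right] at hp hm
    linear_combination (Complex.I / 2) * hp - (Complex.I / 2) * hm
      - Complex.I * Z4 m i h2 hij + inner ℂ (e m) (d2 (e j)) * Complex.I_sq
  -- L facts
  have hsk34 : ContinuousLinearMap.adjoint (x3 + x4) = -(x3 + x4) := skadd _ _ hsk3 hsk4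
  have hsk134 : ContinuousLinearMap.adjoint (x1 + (x3 + x4)) = -(x1 + (x3 + x4)) :=
    skadd _ _ hsk1 hsk34
  have hD134 : D (x1 + (x3 + x4)) = d1 + (d3 + d4) := by
    rw [hDadd x1 (x3 + x4) hsk1 hsk34, hDadd x3 x4 hsk3 hsk4]
  have hsk134m : ContinuousLinearMap.adjoint (x3 + -(x1 + x4)) = -(x3 + -(x1 + x4)) :=
    skadd _ _ hsk3 (skneg _ hsk14)
  have hD134m : D (x3 + -(x1 + x4)) = d3 + -(d1 + d4) := by
    rw [hDadd x3 (-(x1 + x4)) hsk3 (skneg _ hsk14), hDneg _ hsk14, hD14]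
  have hvp3 : (x1 + (x3 + x4)) (e i - e j) = (0:ℂ) • (e i - e j) := by
    simp only [ContinuousLinearMap.add_apply, map_sub, a1i, a1n j hji, a3i, a3j,
      a4j, a4n i hij, sub_zero, zero_sub, zero_smul]
    abel
  have hvm3 : (x3 + -(x1 + x4)) (e i + e j) = (0:ℂ) • (e i + e j) := by
    simp only [ContinuousLinearMap.add_apply, ContinuousLinearMap.neg_apply, map_add,
      a1i, a1n j hji, a3i, a3j, a4j, a4n i hij, add_zero, zero_add, zero_smul]
    abel
  have hwp3 : ∀ m, m ≠ i → m ≠ j → (x1 + (x3 + x4)) (e m) = (0:ℂ) • e m := by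
    intro m h1 h2
    simp only [ContinuousLinearMap.add_apply, a1n m h1, a3n m h1 h2, a4n m h2,
      add_zero, zero_smul]
  have hwm3 : ∀ m, m ≠ i → m ≠ j → (x3 + -(x1 + x4)) (e m) = (0:ℂ) • e m := by
    intro m h1 h2
    simp only [ContinuousLinearMap.add_apply, ContinuousLinearMap.neg_apply, a1n m h1,
      a3n m h1 h2, a4n m h2, add_zero, zero_add, neg_zero, zero_smul]
  have L1 : ∀ m, m ≠ i → m ≠ j →
      (inner ℂ (e m) (d3 (e i)) : ℂ) = inner ℂ (e m) (d4 (e j)) := by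
    intro m h1 h2
    have hp := key _ hsk134 0 hconj0 _ (e m) hvp3 (hwp3 m h1 h2)
    have hm := key _ hsk134m 0 hconj0 _ (e m) hvm3 (hwm3 m h1 h2)
    rw [hD134] at hp
    rw [hD134m] at hm
    simp only [ContinuousLinearMap.add_apply, ContinuousLinearMap.neg_apply, map_sub,
      map_add, inner_add_right, inner_sub_right, inner_neg_right] at hp hm
    linear_combination hp / 2 + hm / 2 + Z1 m j h1 hji
  have L2 : ∀ m, m ≠ i → m ≠ j →
      (inner ℂ (e m) (d3 (e j)) : ℂ) = inner ℂ (e m) (d1 (e i)) := by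
    intro m h1 h2
    have hp := key _ hsk134 0 hconj0 _ (e m) hvp3 (hwp3 m h1 h2)
    have hm := key _ hsk134m 0 hconj0 _ (e m) hvm3 (hwm3 m h1 h2)
    rw [hD134] at hp
    rw [hD134m] at hm
    simp only [ContinuousLinearMap.add_apply, ContinuousLinearMap.neg_apply, map_sub,
      map_add, inner_add_right, inner_sub_right, inner_neg_right] at hp hm
    linear_combination -hp / 2 + hm / 2 + Z4 m i h2 hij
  -- B2
  have hskB : ContinuousLinearMap.adjoint ((4:ℝ)•x1 + ((2:ℝ)•x2 + x4))
      = -((4:ℝ)•x1 + ((2:ℝ)•x2 + x4)) :=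
    skadd _ _ (skr 4 x1 hsk1) (skadd _ _ (skr 2 x2 hsk2) hsk4)
  have hDB : D ((4:ℝ)•x1 + ((2:ℝ)•x2 + x4)) = (4:ℂ)•d1 + ((2:ℂ)•d2 + d4) := by
    rw [hDadd _ _ (skr 4 x1 hsk1) (skadd _ _ (skr 2 x2 hsk2) hsk4),
      hDadd _ _ (skr 2 x2 hsk2) hsk4, hDsmul 4 x1 hsk1, hDsmul 2 x2 hsk2,
      rsmul_clm 4 d1, rsmul_clm 2 d2]
    norm_num
    rfl
  have hvB : ((4:ℝ)•x1 + ((2:ℝ)•x2 + x4)) (e i - (2*Complex.I) • e j)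
      = (0:ℂ) • (e i - (2*Complex.I) • e j) := by
    rw [rsmul_clm 4 x1, rsmul_clm 2 x2]
    simp only [Complex.ofReal_ofNat, ContinuousLinearMap.add_apply,
      ContinuousLinearMap.smul_apply, map_sub, map_smul, a1i, a1n j hji, a2i, a2j,
      a4j, a4n i hij, smul_zero, sub_zero, zero_sub]
    match_scalars <;> (first | ring1 | (ring_nf; simp [Complex.I_sq]; try ring1) | (simp [Complex.I_sq]; try ring1))
  have B2 : (inner ℂ (e i) (d2 (e i)) : ℂ)
      = -Complex.I * inner ℂ (e i) (d1 (e j)) + Complex.I * inner ℂ (e j) (d1 (e i)) := by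
    have raw := key _ hskB 0 hconj0 _ _ hvB hvB
    rw [hDB] at raw
    rw [expand' ((4:ℂ)•d1 + ((2:ℂ)•d2 + d4)) (2*Complex.I) (e i) (e j)] at raw
    simp only [map_mul, map_ofNat, Complex.conj_I, ContinuousLinearMap.add_apply,
      ContinuousLinearMap.smul_apply, inner_add_right, inner_smul_right] at raw
    rw [Z1ii, Z4 i i hij hij, Z1 j j hji hji, Z4jj, C0a, C0b, P2b, P2a] at raw
    ring_nf at raw
    simp only [Complex.I_sq] at raw
    ring_nf at raw
    linear_combination (-1/6 : ℂ) * raw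
  -- B5
  have hskC : ContinuousLinearMap.adjoint ((4:ℝ)•x1 + ((2:ℝ)•x3 + x4))
      = -((4:ℝ)•x1 + ((2:ℝ)•x3 + x4)) :=
    skadd _ _ (skr 4 x1 hsk1) (skadd _ _ (skr 2 x3 hsk3) hsk4)
  have hDC : D ((4:ℝ)•x1 + ((2:ℝ)•x3 + x4)) = (4:ℂ)•d1 + ((2:ℂ)•d3 + d4) := by
    rw [hDadd _ _ (skr 4 x1 hsk1) (skadd _ _ (skr 2 x3 hsk3) hsk4),
      hDadd _ _ (skr 2 x3 hsk3) hsk4, hDsmul 4 x1 hsk1, hDsmul 2 x3 hsk3,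
      rsmul_clm 4 d1, rsmul_clm 2 d3]
    norm_num
    rfl
  have hvC : ((4:ℝ)•x1 + ((2:ℝ)•x3 + x4)) (e i - (2:ℂ) • e j)
      = (0:ℂ) • (e i - (2:ℂ) • e j) := by
    rw [rsmul_clm 4 x1, rsmul_clm 2 x3]
    simp only [Complex.ofReal_ofNat, ContinuousLinearMap.add_apply,
      ContinuousLinearMap.smul_apply, map_sub, map_smul, a1i, a1n j hji, a3i, a3j,
      a4j, a4n i hij, smul_zero, sub_zero, zero_sub]
    match_scalars <;> (first | ring1 | (ring_nf; simp [Complex.I_sq]; try ring1) | (simp [Complex.I_sq]; try ring1))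
  have B5 : (inner ℂ (e i) (d3 (e i)) : ℂ)
      = -(inner ℂ (e i) (d1 (e j))) - inner ℂ (e j) (d1 (e i)) := by
    have raw := key _ hskC 0 hconj0 _ _ hvC hvC
    rw [hDC] at raw
    rw [expand' ((4:ℂ)•d1 + ((2:ℂ)•d3 + d4)) (2:ℂ) (e i) (e j)] at raw
    simp only [map_ofNat, ContinuousLinearMap.add_apply,
      ContinuousLinearMap.smul_apply, inner_add_right, inner_smul_right] at raw
    rw [Z1ii, Z4 i i hij hij, Z1 j j hji hji, Z4jj, C0a, C0b, P3b, P3a] at raw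
    ring_nf at raw
    linear_combination (-1/6 : ℂ) * raw
  -- B6
  have hskD : ContinuousLinearMap.adjoint
        ((4:ℝ)•x1 + ((2:ℝ)•x2 + ((2:ℝ)•x3 + (2:ℝ)•x4)))
      = -((4:ℝ)•x1 + ((2:ℝ)•x2 + ((2:ℝ)•x3 + (2:ℝ)•x4))) :=
    skadd _ _ (skr 4 x1 hsk1)
      (skadd _ _ (skr 2 x2 hsk2) (skadd _ _ (skr 2 x3 hsk3) (skr 2 x4 hsk4)))
  have hDD : D ((4:ℝ)•x1 + ((2:ℝ)•x2 + ((2:ℝ)•x3 + (2:ℝ)•x4)))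
      = (4:ℂ)•d1 + ((2:ℂ)•d2 + ((2:ℂ)•d3 + (2:ℂ)•d4)) := by
    rw [hDadd _ _ (skr 4 x1 hsk1)
        (skadd _ _ (skr 2 x2 hsk2) (skadd _ _ (skr 2 x3 hsk3) (skr 2 x4 hsk4))),
      hDadd _ _ (skr 2 x2 hsk2) (skadd _ _ (skr 2 x3 hsk3) (skr 2 x4 hsk4)),
      hDadd _ _ (skr 2 x3 hsk3) (skr 2 x4 hsk4),
      hDsmul 4 x1 hsk1, hDsmul 2 x2 hsk2, hDsmul 2 x3 hsk3, hDsmul 2 x4 hsk4,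
      rsmul_clm 4 d1, rsmul_clm 2 d2, rsmul_clm 2 d3, rsmul_clm 2 d4]
    norm_num
  have hvD : ((4:ℝ)•x1 + ((2:ℝ)•x2 + ((2:ℝ)•x3 + (2:ℝ)•x4)))
        (e i - (1 + Complex.I) • e j)
      = (0:ℂ) • (e i - (1 + Complex.I) • e j) := by
    rw [rsmul_clm 4 x1, rsmul_clm 2 x2, rsmul_clm 2 x3, rsmul_clm 2 x4]
    simp only [Complex.ofReal_ofNat, ContinuousLinearMap.add_apply,
      ContinuousLinearMap.smul_apply, map_sub, map_smul, a1i, a1n j hji, a2i, a2j,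
      a3i, a3j, a4j, a4n i hij, smul_zero, sub_zero, zero_sub]
    match_scalars <;> (first | ring1 | (ring_nf; simp [Complex.I_sq]; try ring1) | (simp [Complex.I_sq]; try ring1))
  have B6 : (inner ℂ (e i) (d3 (e j)) : ℂ) = Complex.I * inner ℂ (e i) (d2 (e j)) := by
    have raw := key _ hskD 0 hconj0 _ _ hvD hvD
    rw [hDD] at raw
    rw [expand' ((4:ℂ)•d1 + ((2:ℂ)•d2 + ((2:ℂ)•d3 + (2:ℂ)•d4))) (1 + Complex.I)
      (e i) (e j)] at raw
    simp only [map_add, map_one, map_ofNat, Complex.conj_I, ContinuousLinearMap.add_apply,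
      ContinuousLinearMap.smul_apply, inner_add_right, inner_smul_right] at raw
    rw [Z1ii, Z4 i i hij hij, Z1 j j hji hji, Z4jj, C0a, C0b, P2a, P2b, P3a, P3b,
      B2, B5] at raw
    ring_nf at raw
    simp only [Complex.I_sq] at raw
    ring_nf at raw
    linear_combination (Complex.I/4 : ℂ) * raw + inner ℂ (e i) (d3 (e j)) * Complex.I_sq
      + (Complex.I^2 * (inner ℂ (e i) (d1 (e j)) - inner ℂ (e j) (d1 (e i))) / 2) * Complex.I_sq
  -- row versions via skew-symmetry
  have K3 : ∀ n, n ≠ i → n ≠ j →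
      (inner ℂ (e i) (d2 (e n)) : ℂ) = -Complex.I * inner ℂ (e j) (d4 (e n)) := by
    intro n h1 h2
    have h := congrArg (starRingEnd ℂ) (K1 n h1 h2)
    rw [map_mul, sk2 n i, sk4 n j, Complex.conj_I] at h
    linear_combination -h
  have K4 : ∀ n, n ≠ i → n ≠ j →
      (inner ℂ (e j) (d2 (e n)) : ℂ) = Complex.I * inner ℂ (e i) (d1 (e n)) := by
    intro n h1 h2
    have h := congrArg (starRingEnd ℂ) (K2 n h1 h2)
    simp only [map_mul, map_neg, Complex.conj_I, sk2 n j, sk1 n i, neg_neg] at h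
    linear_combination -h
  have L3 : ∀ n, n ≠ i → n ≠ j →
      (inner ℂ (e i) (d3 (e n)) : ℂ) = inner ℂ (e j) (d4 (e n)) := by
    intro n h1 h2
    have h := congrArg (starRingEnd ℂ) (L1 n h1 h2)
    rw [sk3 n i, sk4 n j] at h
    linear_combination -h
  have L4 : ∀ n, n ≠ i → n ≠ j →
      (inner ℂ (e j) (d3 (e n)) : ℂ) = inner ℂ (e i) (d1 (e n)) := by
    intro n h1 h2
    have h := congrArg (starRingEnd ℂ) (L2 n h1 h2)
    rw [sk3 n j, sk1 n i] at h
    linear_combination -h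
  -- corner projection
  set Qc : H →L[ℂ] H := 1 - p - q with hQdef
  have hpv : ∀ v : H, p v = (inner ℂ (e i) v : ℂ) • e i := fun v => rfl
  have hqv : ∀ v : H, q v = (inner ℂ (e j) v : ℂ) • e j := fun v => rfl
  have heijv : ∀ v : H, eij v = (inner ℂ (e j) v : ℂ) • e i := fun v => rfl
  have hejiv : ∀ v : H, eji v = (inner ℂ (e i) v : ℂ) • e j := fun v => rfl
  have hQe : ∀ n, n ≠ i → n ≠ j → Qc (e n) = e n := by
    intro n h1 h2
    rw [hQdef]
    simp only [ContinuousLinearMap.sub_apply, ContinuousLinearMap.one_apply, hpe, hqe]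
    simp [Ne.symm h1, Ne.symm h2]
  have hQi : Qc (e i) = 0 := by
    rw [hQdef]
    simp only [ContinuousLinearMap.sub_apply, ContinuousLinearMap.one_apply, hpe, hqe]
    simp [hji]
  have hQj : Qc (e j) = 0 := by
    rw [hQdef]
    simp only [ContinuousLinearMap.sub_apply, ContinuousLinearMap.one_apply, hpe, hqe]
    simp [hij]
  have hQinner : ∀ (m : ℕ) (v : H), m ≠ i → m ≠ j →
      (inner ℂ (e m) (Qc v) : ℂ) = inner ℂ (e m) v := by
    intro m v h1 h2
    rw [hQdef]
    simp only [ContinuousLinearMap.sub_apply, ContinuousLinearMap.one_apply, hpv, hqv,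
      inner_sub_right, inner_smul_right, hIe]
    simp [h1, h2]
  have hQinneri : ∀ v : H, (inner ℂ (e i) (Qc v) : ℂ) = 0 := by
    intro v
    rw [hQdef]
    simp only [ContinuousLinearMap.sub_apply, ContinuousLinearMap.one_apply, hpv, hqv,
      inner_sub_right, inner_smul_right, hIe]
    simp [hij]
  have hQinnerj : ∀ v : H, (inner ℂ (e j) (Qc v) : ℂ) = 0 := by
    intro v
    rw [hQdef]
    simp only [ContinuousLinearMap.sub_apply, ContinuousLinearMap.one_apply, hpv, hqv,
      inner_sub_right, inner_smul_right, hIe]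
    simp [hji]
  -- the implementing element
  set av : H →L[ℂ] H :=
      (-Complex.I) • (Qc * d1 * p) + Complex.I • (p * d1 * Qc)
      + ((-Complex.I) • (Qc * d4 * q) + Complex.I • (q * d4 * Qc))
      + ((inner ℂ (e i) (d2 (e j)) : ℂ) • p
         + ((Complex.I * inner ℂ (e i) (d1 (e j))) • eij
            + (-(Complex.I * inner ℂ (e j) (d1 (e i)))) • eji)) with havdef
  -- entries of av
  have T1 : ∀ m n, m ≠ i → m ≠ j → n ≠ i → n ≠ j → (inner ℂ (e m) (av (e n)) : ℂ) = 0 := by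
    intro m n hm1 hm2 hn1 hn2
    rw [havdef]
    simp only [ContinuousLinearMap.add_apply, ContinuousLinearMap.smul_apply,
      ContinuousLinearMap.mul_apply, hpe, hqe, heije, hejie]
    simp only [Ne.symm hn1, Ne.symm hn2, if_neg, ite_false, map_zero, smul_zero,
      hQe n hn1 hn2]
    simp only [inner_add_right, inner_smul_right, hpv, hqv, inner_zero_right,
      inner_smul_right, hIe]
    simp [hm1, hm2, hQinner m _ hm1 hm2, Z1 m n hm1 hn1, Z4 m n hm2 hn2]
  have T2 : ∀ m, m ≠ i → m ≠ j →
      (inner ℂ (e m) (av (e i)) : ℂ) = -(Complex.I * inner ℂ (e m) (d1 (e i))) := by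
    intro m hm1 hm2
    rw [havdef]
    simp only [ContinuousLinearMap.add_apply, ContinuousLinearMap.smul_apply,
      ContinuousLinearMap.mul_apply, hpe, hqe, heije, hejie]
    simp only [hji, if_neg, ite_false, ite_true, if_pos, map_zero, smul_zero, hQi]
    simp only [inner_add_right, inner_smul_right, hpv, hqv, inner_zero_right, hIe]
    simp [hm1, hm2, hQinner m _ hm1 hm2]
  have T3 : ∀ m, m ≠ i → m ≠ j →
      (inner ℂ (e m) (av (e j)) : ℂ) = -(Complex.I * inner ℂ (e m) (d4 (e j))) := by
    intro m hm1 hm2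
    rw [havdef]
    simp only [ContinuousLinearMap.add_apply, ContinuousLinearMap.smul_apply,
      ContinuousLinearMap.mul_apply, hpe, hqe, heije, hejie]
    simp only [hij, if_neg, ite_false, ite_true, if_pos, map_zero, smul_zero, hQj]
    simp only [inner_add_right, inner_smul_right, hpv, hqv, inner_zero_right, hIe]
    simp [hm1, hm2, hQinner m _ hm1 hm2]
  have T4 : ∀ n, n ≠ i → n ≠ j →
      (inner ℂ (e i) (av (e n)) : ℂ) = Complex.I * inner ℂ (e i) (d1 (e n)) := by
    intro n hn1 hn2
    rw [havdef]
    simp only [ContinuousLinearMap.add_apply, ContinuousLinearMap.smul_apply,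
      ContinuousLinearMap.mul_apply, hpe, hqe, heije, hejie]
    simp only [Ne.symm hn1, Ne.symm hn2, if_neg, ite_false, map_zero, smul_zero,
      hQe n hn1 hn2]
    simp only [inner_add_right, inner_smul_right, hpv, hqv, inner_zero_right, hIe,
      hQinneri]
    simp [hij]
  have T5 : ∀ n, n ≠ i → n ≠ j →
      (inner ℂ (e j) (av (e n)) : ℂ) = Complex.I * inner ℂ (e j) (d4 (e n)) := by
    intro n hn1 hn2
    rw [havdef]
    simp only [ContinuousLinearMap.add_apply, ContinuousLinearMap.smul_apply,
      ContinuousLinearMap.mul_apply, hpe, hqe, heije, hejie]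
    simp only [Ne.symm hn1, Ne.symm hn2, if_neg, ite_false, map_zero, smul_zero,
      hQe n hn1 hn2]
    simp only [inner_add_right, inner_smul_right, hpv, hqv, inner_zero_right, hIe,
      hQinnerj]
    simp [hji]
  have T6 : (inner ℂ (e i) (av (e i)) : ℂ) = inner ℂ (e i) (d2 (e j)) := by
    rw [havdef]
    simp only [ContinuousLinearMap.add_apply, ContinuousLinearMap.smul_apply,
      ContinuousLinearMap.mul_apply, hpe, hqe, heije, hejie]
    simp only [hji, if_neg, ite_false, ite_true, if_pos, map_zero, smul_zero, hQi]
    simp only [inner_add_right, inner_smul_right, hpv, hqv, inner_zero_right, hIe,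
      hQinneri]
    simp [hij]
  have T7 : (inner ℂ (e j) (av (e j)) : ℂ) = 0 := by
    rw [havdef]
    simp only [ContinuousLinearMap.add_apply, ContinuousLinearMap.smul_apply,
      ContinuousLinearMap.mul_apply, hpe, hqe, heije, hejie]
    simp only [hij, if_neg, ite_false, ite_true, if_pos, map_zero, smul_zero, hQj]
    simp only [inner_add_right, inner_smul_right, hpv, hqv, inner_zero_right, hIe,
      hQinnerj]
    simp [hji]
  have T8 : (inner ℂ (e i) (av (e j)) : ℂ) = Complex.I * inner ℂ (e i) (d1 (e j)) := by
    rw [havdef]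
    simp only [ContinuousLinearMap.add_apply, ContinuousLinearMap.smul_apply,
      ContinuousLinearMap.mul_apply, hpe, hqe, heije, hejie]
    simp only [hij, if_neg, ite_false, ite_true, if_pos, map_zero, smul_zero, hQj]
    simp only [inner_add_right, inner_smul_right, hpv, hqv, inner_zero_right, hIe,
      hQinneri]
    simp [hij]
  have T9 : (inner ℂ (e j) (av (e i)) : ℂ) = -(Complex.I * inner ℂ (e j) (d1 (e i))) := by
    rw [havdef]
    simp only [ContinuousLinearMap.add_apply, ContinuousLinearMap.smul_apply,
      ContinuousLinearMap.mul_apply, hpe, hqe, heije, hejie]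
    simp only [hji, if_neg, ite_false, ite_true, if_pos, map_zero, smul_zero, hQi]
    simp only [inner_add_right, inner_smul_right, hpv, hqv, inner_zero_right, hIe,
      hQinnerj]
    simp [hji]
  -- skew-adjointness of av
  have hadj_av : ContinuousLinearMap.adjoint av = -av := by
    apply clm_ext e
    intro n m
    rw [ContinuousLinearMap.adjoint_inner_right, ContinuousLinearMap.neg_apply,
      inner_neg_right, ← inner_conj_symm]
    by_cases hmi : m = i
    · rw [hmi]
      by_cases hni : n = i
      · rw [hni]
        rw [T6]
        have h := sk2 i j
        rw [P2b] at h
        exact h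
      · by_cases hnj : n = j
        · rw [hnj]
          rw [T9, T8, map_neg, map_mul, Complex.conj_I, sk1 j i]
          ring
        · rw [T2 n hni hnj, T4 n hni hnj, map_neg, map_mul, Complex.conj_I, sk1 n i]
          ring
    · by_cases hmj : m = j
      · rw [hmj]
        by_cases hni : n = i
        · rw [hni]
          rw [T8, T9, map_mul, Complex.conj_I, sk1 i j]
          ring
        · by_cases hnj : n = j
          · rw [hnj]
            rw [T7]
            simp
          · rw [T3 n hni hnj, T5 n hni hnj, map_neg, map_mul, Complex.conj_I, sk4 n j]
            ring
      · by_cases hni : n = i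
        · rw [hni]
          rw [T4 m hmi hmj, T2 m hmi hmj, map_mul, Complex.conj_I, sk1 i m]
          ring
        · by_cases hnj : n = j
          · rw [hnj]
            rw [T5 m hmi hmj, T3 m hmi hmj, map_mul, Complex.conj_I, sk4 j m]
            ring
          · rw [T1 n m hni hnj hmi hmj, T1 m n hmi hmj hni hnj]
            simp
  -- action formulas
  have hx1v : ∀ v : H, x1 v = (Complex.I * inner ℂ (e i) v) • e i := by
    intro v
    rw [hx1def, ContinuousLinearMap.smul_apply, hpv, smul_smul]
  have hx4v : ∀ v : H, x4 v = (Complex.I * inner ℂ (e j) v) • e j := by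
    intro v
    rw [hx4def, ContinuousLinearMap.smul_apply, hqv, smul_smul]
  have hx2v : ∀ v : H, x2 v = (inner ℂ (e j) v : ℂ) • e i - (inner ℂ (e i) v : ℂ) • e j := by
    intro v
    rw [hx2def, ContinuousLinearMap.sub_apply, heijv, hejiv]
  have hx3v : ∀ v : H, x3 v
      = (Complex.I * inner ℂ (e j) v) • e i + (Complex.I * inner ℂ (e i) v) • e j := by
    intro v
    rw [hx3def, ContinuousLinearMap.smul_apply, ContinuousLinearMap.add_apply, heijv,
      hejiv, smul_add, smul_smul, smul_smul]
  refine ⟨av, hadj_av, ?_, ?_, ?_, ?_⟩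
  · -- d1 = av * x1 - x1 * av
    apply clm_ext e
    intro n m
    simp only [ContinuousLinearMap.sub_apply, ContinuousLinearMap.mul_apply,
      inner_sub_right]
    by_cases hni : n = i
    · rw [hni]
      rw [a1i, map_smul, inner_smul_right, hx1v (av (e i)), inner_smul_right, hIe]
      by_cases hmi : m = i
      · rw [hmi]
        rw [if_pos rfl, T6]
        linear_combination Z1ii
      · rw [if_neg hmi]
        by_cases hmj : m = j
        · rw [hmj]
          rw [T9]
          linear_combination inner ℂ (e j) (d1 (e i)) * Complex.I_sq
        · rw [T2 m hmi hmj]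
          linear_combination inner ℂ (e m) (d1 (e i)) * Complex.I_sq
    · rw [a1n n hni, map_zero, inner_zero_right, hx1v (av (e n)), inner_smul_right, hIe]
      by_cases hmi : m = i
      · rw [hmi]
        rw [if_pos rfl]
        by_cases hnj : n = j
        · rw [hnj]
          rw [T8]
          linear_combination inner ℂ (e i) (d1 (e j)) * Complex.I_sq
        · rw [T4 n hni hnj]
          linear_combination inner ℂ (e i) (d1 (e n)) * Complex.I_sq
      · rw [if_neg hmi]
        linear_combination Z1 m n hmi hni
  · -- d2 = av * x2 - x2 * av
    apply clm_ext e
    intro n m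
    simp only [ContinuousLinearMap.sub_apply, ContinuousLinearMap.mul_apply,
      inner_sub_right]
    rw [hx2v (av (e n)), inner_sub_right, inner_smul_right, inner_smul_right, hIe, hIe]
    by_cases hni : n = i
    · rw [hni]
      rw [a2i, map_neg, inner_neg_right]
      by_cases hmi : m = i
      · rw [hmi]
        rw [if_pos rfl, if_neg hij, T8, T9]
        linear_combination B2
      · by_cases hmj : m = j
        · rw [hmj]
          rw [if_neg hji, if_pos rfl, T7, T6]
          linear_combination P2b
        · rw [if_neg hmi, if_neg hmj, T3 m hmi hmj]
          linear_combination K1 m hmi hmj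
    · by_cases hnj : n = j
      · rw [hnj]
        rw [a2j]
        by_cases hmi : m = i
        · rw [hmi]
          rw [if_pos rfl, if_neg hij, T6, T7]
          ring
        · by_cases hmj : m = j
          · rw [hmj]
            rw [if_neg hji, if_pos rfl, T9, T8]
            linear_combination P2a - B2
          · rw [if_neg hmi, if_neg hmj, T2 m hmi hmj]
            linear_combination K2 m hmi hmj
      · rw [a2n n hni hnj, map_zero, inner_zero_right]
        by_cases hmi : m = i
        · rw [hmi]
          rw [if_pos rfl, if_neg hij, T5 n hni hnj]
          linear_combination K3 n hni hnj
        · by_cases hmj : m = j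
          · rw [hmj]
            rw [if_neg hji, if_pos rfl, T4 n hni hnj]
            linear_combination K4 n hni hnj
          · rw [if_neg hmi, if_neg hmj]
            linear_combination Z2 m n hmi hmj hni hnj
  · -- d3 = av * x3 - x3 * av
    apply clm_ext e
    intro n m
    simp only [ContinuousLinearMap.sub_apply, ContinuousLinearMap.mul_apply,
      inner_sub_right]
    rw [hx3v (av (e n)), inner_add_right, inner_smul_right, inner_smul_right, hIe, hIe]
    by_cases hni : n = i
    · rw [hni]
      rw [a3i, map_smul, inner_smul_right]
      by_cases hmi : m = i
      · rw [hmi]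
        rw [if_pos rfl, if_neg hij, T8, T9, T6]
        linear_combination B5 - (inner ℂ (e i) (d1 (e j)) + inner ℂ (e j) (d1 (e i)))
          * Complex.I_sq
      · by_cases hmj : m = j
        · rw [hmj]
          rw [if_neg hji, if_pos rfl, T7, T6]
          linear_combination P3b - B6
        · rw [if_neg hmi, if_neg hmj, T3 m hmi hmj]
          linear_combination L1 m hmi hmj + inner ℂ (e m) (d4 (e j)) * Complex.I_sq
    · by_cases hnj : n = j
      · rw [hnj]
        rw [a3j, map_smul, inner_smul_right]
        by_cases hmi : m = i
        · rw [hmi]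
          rw [if_pos rfl, if_neg hij, T6, T7]
          linear_combination B6
        · by_cases hmj : m = j
          · rw [hmj]
            rw [if_neg hji, if_pos rfl, T9, T8]
            linear_combination P3a - B5 + (inner ℂ (e i) (d1 (e j))
              + inner ℂ (e j) (d1 (e i))) * Complex.I_sq
          · rw [if_neg hmi, if_neg hmj, T2 m hmi hmj]
            linear_combination L2 m hmi hmj + inner ℂ (e m) (d1 (e i)) * Complex.I_sq
      · rw [a3n n hni hnj, map_zero, inner_zero_right]
        by_cases hmi : m = i
        · rw [hmi]
          rw [if_pos rfl, if_neg hij, T5 n hni hnj]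
          linear_combination L3 n hni hnj + inner ℂ (e j) (d4 (e n)) * Complex.I_sq
        · by_cases hmj : m = j
          · rw [hmj]
            rw [if_neg hji, if_pos rfl, T4 n hni hnj]
            linear_combination L4 n hni hnj + inner ℂ (e i) (d1 (e n)) * Complex.I_sq
          · rw [if_neg hmi, if_neg hmj]
            linear_combination Z3 m n hmi hmj hni hnj
  · -- d4 = av * x4 - x4 * av
    apply clm_ext e
    intro n m
    simp only [ContinuousLinearMap.sub_apply, ContinuousLinearMap.mul_apply,
      inner_sub_right]
    rw [hx4v (av (e n)), inner_smul_right, hIe]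
    by_cases hnj : n = j
    · rw [hnj]
      rw [a4j, map_smul, inner_smul_right]
      by_cases hmj : m = j
      · rw [hmj]
        rw [if_pos rfl, T7]
        linear_combination Z4jj
      · rw [if_neg hmj]
        by_cases hmi : m = i
        · rw [hmi]
          rw [T8]
          linear_combination C0a - inner ℂ (e i) (d1 (e j)) * Complex.I_sq
        · rw [T3 m hmi hmj]
          linear_combination inner ℂ (e m) (d4 (e j)) * Complex.I_sq
    · rw [a4n n hnj, map_zero, inner_zero_right]
      by_cases hmj : m = j
      · rw [hmj]
        rw [if_pos rfl]
        by_cases hni : n = i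
        · rw [hni]
          rw [T9]
          linear_combination C0b - inner ℂ (e j) (d1 (e i)) * Complex.I_sq
        · rw [T5 n hni hnj]
          linear_combination inner ℂ (e j) (d4 (e n)) * Complex.I_sq
      · rw [if_neg hmj]
        linear_combination Z4 m n hmj hnj
end

section
/- Let ∇ be a local inner derivation on B_sk(H) and let i, k be distinct natural numbers. If c, c' ∈ B_sk(H) satisfy ∇(I e_{i,i}) = [c, I e_{i,i}] and ∇(I e_{k,k}) = [c', I e_{k,k}], then c^{i,k} = c'^{i,k} and c^{k,i} = c'^{k,i}. -/
lemma matUnit_skew {H : Type*} [NormedAddCommGroup H] [InnerProductSpace ℂ H]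
    [CompleteSpace H] (e : HilbertBasis ℕ ℂ H) (j : ℕ) :
    ContinuousLinearMap.adjoint (Complex.I • matUnit e j j)
      = -(Complex.I • matUnit e j j) := by
  have h : ContinuousLinearMap.adjoint (matUnit e j j) = matUnit e j j := by
    symm
    rw [ContinuousLinearMap.eq_adjoint_iff]
    intro x y
    simp [matUnit, inner_smul_left, inner_smul_right, mul_comm]
  rw [map_smulₛₗ, h]
  simp


/-- **(Equalities (5.1) from the proof of Theorem 5.2, Ayupov–Arzikulov–Umrzaqov.)**
Let `H` be a separable infinite-dimensional complex Hilbert space with orthonormal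
basis `(e_n)` and let `D` be a local inner derivation on the Lie algebra `B_sk(H)` of
skew-adjoint bounded operators (a real-linear map whose every value is given by some
inner derivation).  Let `i ≠ k` be natural numbers.  If `c, c' ∈ B_sk(H)` satisfy
`D(I e_{i,i}) = [c, I e_{i,i}]` and `D(I e_{k,k}) = [c', I e_{k,k}]`, then
`c^{i,k} = c'^{i,k}` and `c^{k,i} = c'^{k,i}`
(where `a^{i,j} = ⟨a e_j, e_i⟩` is the `(i,j)` matrix entry and `I = √-1`). -/
theorem local_inner_derivation_diagonal_entries_agree
    {H : Type*} [NormedAddCommGroup H] [InnerProductSpace ℂ H] [CompleteSpace H]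
    (e : HilbertBasis ℕ ℂ H)
    (D : (H →L[ℂ] H) → (H →L[ℂ] H))
    (hDadd : ∀ x y : H →L[ℂ] H,
        ContinuousLinearMap.adjoint x = -x → ContinuousLinearMap.adjoint y = -y →
        D (x + y) = D x + D y)
    (hDsmul : ∀ (r : ℝ) (x : H →L[ℂ] H),
        ContinuousLinearMap.adjoint x = -x → D (r • x) = r • D x)
    (hDloc : ∀ x : H →L[ℂ] H, ContinuousLinearMap.adjoint x = -x →
        ∃ a : H →L[ℂ] H, ContinuousLinearMap.adjoint a = -a ∧ D x = a * x - x * a)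
    (i k : ℕ) (hik : i ≠ k)
    (c c' : H →L[ℂ] H)
    (hc : ContinuousLinearMap.adjoint c = -c)
    (hc' : ContinuousLinearMap.adjoint c' = -c')
    (hcD : D (Complex.I • matUnit e i i)
        = c * (Complex.I • matUnit e i i) - (Complex.I • matUnit e i i) * c)
    (hc'D : D (Complex.I • matUnit e k k)
        = c' * (Complex.I • matUnit e k k) - (Complex.I • matUnit e k k) * c') :
    (inner ℂ (e i) (c (e k)) : ℂ) = inner ℂ (e i) (c' (e k)) ∧
      (inner ℂ (e k) (c (e i)) : ℂ) = inner ℂ (e k) (c' (e i)) := by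
  set Ei := Complex.I • matUnit e i i with hEi
  set Ek := Complex.I • matUnit e k k with hEk
  have hxi := matUnit_skew e i
  have hxk := matUnit_skew e k
  have hsum : ContinuousLinearMap.adjoint (Ei + Ek) = -(Ei + Ek) := by
    rw [map_add, hxi, hxk]; abel
  obtain ⟨a, ha, haD⟩ := hDloc (Ei + Ek) hsum
  have key : a * (Ei + Ek) - (Ei + Ek) * a
      = (c * Ei - Ei * c) + (c' * Ek - Ek * c') := by
    rw [← haD, hDadd _ _ hxi hxk, hcD, hc'D]
  have ho : ∀ p q : ℕ, (inner ℂ (e p) (e q) : ℂ) = if p = q then 1 else 0 :=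
    fun p q => orthonormal_iff_ite.mp e.orthonormal p q
  constructor
  · have h1 := congrArg (fun T : H →L[ℂ] H => (inner ℂ (e i) (T (e k)) : ℂ)) key
    simp only [hEi, hEk, ContinuousLinearMap.sub_apply, ContinuousLinearMap.add_apply,
      ContinuousLinearMap.mul_apply, ContinuousLinearMap.smul_apply, matUnit,
      ContinuousLinearMap.smulRight_apply, innerSL_apply_apply, map_smul, inner_sub_right,
      inner_add_right, inner_smul_right, ho, hik, if_neg, if_pos] at h1
    simp only [map_add, map_smul, inner_add_right, inner_smul_right, smul_smul, ho,
      if_neg hik, if_neg (Ne.symm hik), if_pos rfl, if_true, if_false] at h1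
    apply mul_left_cancel₀ Complex.I_ne_zero
    linear_combination h1
  · have h1 := congrArg (fun T : H →L[ℂ] H => (inner ℂ (e k) (T (e i)) : ℂ)) key
    simp only [hEi, hEk, ContinuousLinearMap.sub_apply, ContinuousLinearMap.add_apply,
      ContinuousLinearMap.mul_apply, ContinuousLinearMap.smul_apply, matUnit,
      ContinuousLinearMap.smulRight_apply, innerSL_apply_apply, map_smul, inner_sub_right,
      inner_add_right, inner_smul_right, ho, hik] at h1
    simp only [map_add, map_smul, inner_add_right, inner_smul_right, smul_smul, ho,
      if_neg hik, if_neg (Ne.symm hik), if_pos rfl, if_true, if_false] at h1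
    apply mul_left_cancel₀ Complex.I_ne_zero
    linear_combination -h1
end
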